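/- arXiv:1205.3815 — 2 statements merged into one kernel-verified Lean document; each statement's English description precedes it below -/
import Mathlib

section
/- Let X(z) = (P₁(z), P₂(z)) and Y(z) = (Q₁(z), Q₂(z)) be polynomial vector fields on ℂ² (P₁, P₂, Q₁, Q₂ ∈ ℂ[x,y]), each with at most isolated zeros, i.e. both common zero sets {P₁ = P₂ = 0} and {Q₁ = Q₂ = 0} are finite. Suppose γ : ℂ → ℂ² is a holomorphic map with γ'(t) = X(γ(t)) for all t ∈ ℂ, whose image is non-algebraic (not contained in the zero set of any nonzero polynomial in ℂ[x,y]), and such that for every t ∈ ℂ the vectors X(γ(t)) and Y(γ(t)) are linearly dependent over ℂ. Then there exists a constant c ∈ ℂ, c ≠ 0, with Q₁ = c·P₁ and Q₂ = c·P₂ as polynomials. -/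
/-!
The polynomial `P₁ Q₂ - P₂ Q₁` vanishes along the trajectory, so it is zero because the
trajectory is non-algebraic. A finite common zero set forces `P₁, P₂` (and likewise `Q₁, Q₂`)
to be relatively prime, since over an algebraically closed field every non-constant polynomial
in two variables has infinitely many zeros. From `P₁ Q₂ = P₂ Q₁` and coprimality, `P₁` and `Q₁`
divide each other, and so do `P₂` and `Q₂`; the unit relating them is a nonzero constant.
-/

open MvPolynomial

section RelPrime

variable {α : Type*} [CommMonoidWithZero α] [IsCancelMulZero α] [DecompositionMonoid α]

theorem exists_unit_mul_eq_of_isRelPrime_of_mul_eq_mul {P₁ P₂ Q₁ Q₂ : α}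
    (hP : IsRelPrime P₁ P₂) (hQ : IsRelPrime Q₁ Q₂) (h : P₁ * Q₂ = P₂ * Q₁) :
    ∃ u : αˣ, Q₁ = u * P₁ ∧ Q₂ = u * P₂ := by
  have hP₁Q₁ : P₁ ∣ Q₁ := hP.dvd_of_dvd_mul_left ⟨Q₂, h.symm⟩
  have hQ₁P₁ : Q₁ ∣ P₁ := hQ.dvd_of_dvd_mul_left
    ⟨P₂, by rw [mul_comm Q₂, h, mul_comm]⟩
  have hP₂Q₂ : P₂ ∣ Q₂ := hP.symm.dvd_of_dvd_mul_left ⟨Q₁, h⟩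
  have hQ₂P₂ : Q₂ ∣ P₂ := hQ.symm.dvd_of_dvd_mul_left
    ⟨P₁, by rw [mul_comm Q₁, ← h, mul_comm]⟩
  rcases eq_or_ne P₁ 0 with rfl | hP₁
  · obtain ⟨v, hv⟩ := associated_of_dvd_dvd hP₂Q₂ hQ₂P₂
    exact ⟨v, by rw [zero_dvd_iff.mp hP₁Q₁, mul_zero], by rw [← hv, mul_comm]⟩
  · obtain ⟨u, hu⟩ := associated_of_dvd_dvd hP₁Q₁ hQ₁P₁
    refine ⟨u, by rw [← hu, mul_comm], mul_left_cancel₀ hP₁ ?_⟩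
    rw [h, ← hu]
    ac_rfl

end RelPrime

namespace Polynomial

open Bivariate

variable {K : Type*} [Field K] [IsAlgClosed K]

theorem exists_evalEval_eq_zero_of_eval_leadingCoeff_ne_zero {f : K[X][Y]}
    (hf : f.natDegree ≠ 0) {x : K} (hx : f.leadingCoeff.eval x ≠ 0) :
    ∃ y, f.evalEval x y = 0 := by
  have hdeg : (f.map (evalRingHom x)).natDegree = f.natDegree :=
    natDegree_map_of_leadingCoeff_ne_zero _ hx
  obtain ⟨y, hy⟩ := IsAlgClosed.exists_root (f.map (evalRingHom x))
    fun h ↦ hf (hdeg ▸ natDegree_eq_of_degree_eq_some h)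
  exact ⟨y, by rwa [← map_evalRingHom_eval]⟩

theorem infinite_setOf_evalEval_eq_zero {f : K[X][Y]} (hf : ¬IsUnit f) :
    {z : K × K | f.evalEval z.1 z.2 = 0}.Infinite := by
  -- Either `f` is constant in `Y` and a root of it gives a whole line of zeros, or every `x` off
  -- the finitely many roots of the leading coefficient carries a zero `(x, y)`.
  rcases eq_or_ne f.natDegree 0 with h0 | h0
  · rw [eq_C_of_natDegree_eq_zero h0] at hf ⊢
    obtain ⟨x, hx⟩ := IsAlgClosed.exists_root _
      (mt isUnit_iff_degree_eq_zero.mpr (mt (IsUnit.map C) hf))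
    exact Set.infinite_of_injective_forall_mem (Prod.mk_right_injective x)
      fun y ↦ by simpa [evalEval_C] using hx
  · have hlc : f.leadingCoeff ≠ 0 := leadingCoeff_ne_zero.mpr (by rintro rfl; simp at h0)
    choose! y hy using fun x (hx : ¬f.leadingCoeff.IsRoot x) ↦
      exists_evalEval_eq_zero_of_eval_leadingCoeff_ne_zero h0 hx
    exact Set.infinite_of_injOn_mapsTo (f := fun x ↦ (x, y x))
      (fun a _ b _ hab ↦ congrArg Prod.fst hab) hy (finite_setOfPred_isRoot hlc).infinite_compl

end Polynomial

namespace MvPolynomial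

theorem eval_equivMvPolynomial {R : Type*} [CommSemiring R] (x y : R)
    (f : Polynomial (Polynomial R)) :
    eval ![x, y] (Polynomial.Bivariate.equivMvPolynomial R f) = f.evalEval x y := by
  rw [← Polynomial.coe_evalEvalRingHom]
  change ((eval ![x, y]).comp
    (Polynomial.Bivariate.equivMvPolynomial R).toRingEquiv.toRingHom) f = _
  congr 1
  ext <;> simp

variable {K : Type*} [Field K] [IsAlgClosed K]

theorem infinite_setOf_eval_eq_zero {p : MvPolynomial (Fin 2) K} (hp : ¬IsUnit p) :
    {z : K × K | eval ![z.1, z.2] p = 0}.Infinite := by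
  obtain ⟨f, rfl⟩ := (Polynomial.Bivariate.equivMvPolynomial K).surjective p
  simpa only [eval_equivMvPolynomial] using
    Polynomial.infinite_setOf_evalEval_eq_zero (mt (IsUnit.map _) hp)

theorem isRelPrime_of_finite_setOf_eval_eq_zero {p q : MvPolynomial (Fin 2) K}
    (h : {z : K × K | eval ![z.1, z.2] p = 0 ∧ eval ![z.1, z.2] q = 0}.Finite) :
    IsRelPrime p q := by
  rintro d ⟨a, rfl⟩ ⟨b, rfl⟩
  by_contra hd
  exact infinite_setOf_eval_eq_zero hd <| h.subset fun z (hz : eval _ d = 0) ↦ by simp [hz]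

end MvPolynomial

theorem vector_field_determined_by_nonalgebraic_trajectory_general
    (P₁ P₂ Q₁ Q₂ : MvPolynomial (Fin 2) ℂ)
    (X Y : ℂ × ℂ → ℂ × ℂ)
    (hX : ∀ z : ℂ × ℂ, X z = (eval ![z.1, z.2] P₁, eval ![z.1, z.2] P₂))
    (hY : ∀ z : ℂ × ℂ, Y z = (eval ![z.1, z.2] Q₁, eval ![z.1, z.2] Q₂))
    (hisoX : {z : ℂ × ℂ | eval ![z.1, z.2] P₁ = 0 ∧ eval ![z.1, z.2] P₂ = 0}.Finite)
    (hisoY : {z : ℂ × ℂ | eval ![z.1, z.2] Q₁ = 0 ∧ eval ![z.1, z.2] Q₂ = 0}.Finite)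
    (γ : ℂ → ℂ × ℂ)
    (hna : ¬ ∃ f : MvPolynomial (Fin 2) ℂ, f ≠ 0 ∧
        ∀ z ∈ Set.range γ, eval ![z.1, z.2] f = 0)
    (hdep : ∀ t : ℂ,
        (X (γ t)).1 * (Y (γ t)).2 - (X (γ t)).2 * (Y (γ t)).1 = 0) :
    ∃ c : ℂ, c ≠ 0 ∧ Q₁ = C c * P₁ ∧ Q₂ = C c * P₂ := by
  have hcross : P₁ * Q₂ - P₂ * Q₁ = 0 := by
    by_contra hne
    refine hna ⟨_, hne, ?_⟩
    rintro _ ⟨t, rfl⟩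
    simpa [hX, hY] using hdep t
  obtain ⟨u, hu₁, hu₂⟩ := exists_unit_mul_eq_of_isRelPrime_of_mul_eq_mul
    (isRelPrime_of_finite_setOf_eval_eq_zero hisoX) (isRelPrime_of_finite_setOf_eval_eq_zero hisoY)
    (sub_eq_zero.mp hcross)
  obtain ⟨c, hc, hcu⟩ := isUnit_iff_eq_C_of_isReduced.mp u.isUnit
  exact ⟨c, hc.ne_zero, hcu ▸ hu₁, hcu ▸ hu₂⟩

/-- A non-algebraic trajectory determines a polynomial vector field with at most
isolated zeros up to multiplication by a nonzero constant. -/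
theorem vector_field_determined_by_nonalgebraic_trajectory
    (P₁ P₂ Q₁ Q₂ : MvPolynomial (Fin 2) ℂ)
    (X Y : ℂ × ℂ → ℂ × ℂ)
    (hX : ∀ z : ℂ × ℂ, X z = (eval ![z.1, z.2] P₁, eval ![z.1, z.2] P₂))
    (hY : ∀ z : ℂ × ℂ, Y z = (eval ![z.1, z.2] Q₁, eval ![z.1, z.2] Q₂))
    (hisoX : {z : ℂ × ℂ | eval ![z.1, z.2] P₁ = 0 ∧ eval ![z.1, z.2] P₂ = 0}.Finite)
    (hisoY : {z : ℂ × ℂ | eval ![z.1, z.2] Q₁ = 0 ∧ eval ![z.1, z.2] Q₂ = 0}.Finite)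
    (γ : ℂ → ℂ × ℂ)
    (hγ : ∀ t : ℂ, HasDerivAt γ (X (γ t)) t)
    (hna : ¬ ∃ f : MvPolynomial (Fin 2) ℂ, f ≠ 0 ∧
        ∀ z ∈ Set.range γ, eval ![z.1, z.2] f = 0)
    (hdep : ∀ t : ℂ,
        (X (γ t)).1 * (Y (γ t)).2 - (X (γ t)).2 * (Y (γ t)).1 = 0) :
    ∃ c : ℂ, c ≠ 0 ∧ Q₁ = C c * P₁ ∧ Q₂ = C c * P₂ :=
  vector_field_determined_by_nonalgebraic_trajectory_general P₁ P₂ Q₁ Q₂ X Y hX hY hisoX hisoY γ hna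
    hdep
end

section
/- Let P, Q, f, g ∈ ℂ[x,y] be polynomials in two variables such that g ≠ 0, f is not a scalar multiple of g (there is no c ∈ ℂ with f = c·g), and the first-integral identity P·(∂ₓf·g − f·∂ₓg) + Q·(∂ᵧf·g − f·∂ᵧg) = 0 holds in ℂ[x,y] (i.e. the rational function f/g is constant along the vector field (P, Q)). Let γ : ℂ → ℂ² be a holomorphic map with γ'(t) = (P(γ(t)), Q(γ(t))) for all t ∈ ℂ, and assume g(γ(0)) ≠ 0. Then the polynomial h := g(γ(0))·f − f(γ(0))·g is nonzero and vanishes identically on the image of γ; in particular the trajectory of the vector field (P, Q) through γ(0) is algebraic, i.e. contained in the zero set of a nonzero polynomial. -/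
/-!
Along a trajectory `x(t)` of `(P, Q)` the chain rule turns the first-integral identity into the
vanishing of the Wronskian `F' G - F G'` of the entire functions `F = f ∘ x` and `G = g ∘ x`.
Near `0`, where `G ≠ 0`, this makes `F / G` constant, so `G(0) F - F(0) G` vanishes near `0`,
hence everywhere by the identity theorem. The polynomial `g(x(0)) f - f(x(0)) g` is nonzero
because otherwise `f` would be the constant multiple `f(x(0)) / g(x(0))` of `g`.
-/

open MvPolynomial Filter Topology

namespace MvPolynomial

theorem hasDerivAt_eval_comp {σ 𝕜 : Type*} [Fintype σ] [NontriviallyNormedField 𝕜]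
    (p : MvPolynomial σ 𝕜) {x : 𝕜 → σ → 𝕜} {x' : σ → 𝕜} {t : 𝕜} (hx : HasDerivAt x x' t) :
    HasDerivAt (fun s => eval (x s) p) (∑ i, eval (x t) (pderiv i p) * x' i) t := by
  induction p using MvPolynomial.induction_on with
  | C a => simpa using hasDerivAt_const t a
  | add p q hp hq =>
    simpa only [map_add, add_mul, Finset.sum_add_distrib, Pi.add_def] using hp.add hq
  | mul_X p i hp =>
    classical
    simp only [map_mul, eval_X]
    refine (hp.mul (hasDerivAt_pi.1 hx i)).congr_deriv ?_
    simp only [Derivation.leibniz, pderiv_X, Pi.single_apply, smul_eq_mul, mul_ite, mul_one,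
      mul_zero, map_add, apply_ite (eval (x t)), map_zero, map_mul, eval_X, add_mul, ite_mul,
      zero_mul, Finset.sum_add_distrib, Finset.sum_ite_eq, Finset.mem_univ, ↓reduceIte,
      Finset.sum_mul, add_comm, add_right_inj]
    exact Finset.sum_congr rfl fun j _ => by ring

end MvPolynomial

theorem eventually_mul_sub_mul_eq_zero_of_wronskian_eq_zero {𝕜 : Type*} [RCLike 𝕜]
    {F G : 𝕜 → 𝕜} (hF : Differentiable 𝕜 F) (hG : Differentiable 𝕜 G)
    (hW : ∀ t, deriv F t * G t = F t * deriv G t) {t₀ : 𝕜} (h₀ : G t₀ ≠ 0) :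
    ∀ᶠ t in 𝓝 t₀, G t₀ * F t - F t₀ * G t = 0 := by
  obtain ⟨r, hr, hG_ne⟩ :=
    Metric.eventually_nhds_iff_ball.1 (hG.continuous.continuousAt.eventually_ne h₀)
  have hquot : ∀ t ∈ Metric.ball t₀ r, HasDerivAt (F / G) 0 t := fun t ht => by
    simpa [hW t] using (hF t).hasDerivAt.div (hG t).hasDerivAt (hG_ne t ht)
  have hconst : ∀ t ∈ Metric.ball t₀ r, (F / G) t = (F / G) t₀ := fun t ht =>
    Metric.isOpen_ball.is_const_of_deriv_eq_zero (convex_ball t₀ r).isPreconnected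
      (fun s hs => (hquot s hs).differentiableAt.differentiableWithinAt)
      (fun s hs => (hquot s hs).deriv) ht (Metric.mem_ball_self hr)
  filter_upwards [Metric.ball_mem_nhds t₀ hr] with t ht
  have := hconst t ht
  rw [Pi.div_apply, Pi.div_apply, div_eq_div_iff (hG_ne t ht) h₀] at this
  linear_combination this

theorem mul_sub_mul_eq_zero_of_wronskian_eq_zero {F G : ℂ → ℂ} (hF : Differentiable ℂ F)
    (hG : Differentiable ℂ G) (hW : ∀ t, deriv F t * G t = F t * deriv G t) {t₀ : ℂ}
    (h₀ : G t₀ ≠ 0) (t : ℂ) : G t₀ * F t - F t₀ * G t = 0 := by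
  have hu : Differentiable ℂ (fun t => G t₀ * F t - F t₀ * G t) := by fun_prop
  exact congrFun (AnalyticOnNhd.eq_of_eventuallyEq
    (Complex.analyticOnNhd_univ_iff_differentiable.2 hu) analyticOnNhd_const
    (eventually_mul_sub_mul_eq_zero_of_wronskian_eq_zero hF hG hW h₀)) t

theorem trajectory_algebraic_of_rational_first_integral_general
    (P Q f g : MvPolynomial (Fin 2) ℂ)
    (hnc : ¬ ∃ c : ℂ, f = C c * g)
    (hfi : P * (pderiv 0 f * g - f * pderiv 0 g)
         + Q * (pderiv 1 f * g - f * pderiv 1 g) = 0)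
    (γ : ℂ → ℂ × ℂ)
    (hγ : ∀ t : ℂ, HasDerivAt γ
        (eval ![(γ t).1, (γ t).2] P, eval ![(γ t).1, (γ t).2] Q) t)
    (hg0 : eval ![(γ 0).1, (γ 0).2] g ≠ 0) :
    C (eval ![(γ 0).1, (γ 0).2] g) * f - C (eval ![(γ 0).1, (γ 0).2] f) * g ≠ 0 ∧
    ∀ t : ℂ, eval ![(γ t).1, (γ t).2]
        (C (eval ![(γ 0).1, (γ 0).2] g) * f - C (eval ![(γ 0).1, (γ 0).2] f) * g) = 0 := by
  set x : ℂ → Fin 2 → ℂ := fun t => ![(γ t).1, (γ t).2]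
  have hx : ∀ t, HasDerivAt x ![eval (x t) P, eval (x t) Q] t := fun t => by
    refine hasDerivAt_pi.2 fun i => ?_
    fin_cases i
    · simpa [x] using (hγ t).hasFDerivAt.fst.hasDerivAt
    · simpa [x] using (hγ t).hasFDerivAt.snd.hasDerivAt
  have hflow : ∀ p t, HasDerivAt (fun s => eval (x s) p)
      (eval (x t) (P * pderiv 0 p + Q * pderiv 1 p)) t := fun p t => by
    simpa [Fin.sum_univ_two, mul_comm] using hasDerivAt_eval_comp p (hx t)
  have hW : ∀ t, deriv (fun s => eval (x s) f) t * eval (x t) g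
      = eval (x t) f * deriv (fun s => eval (x s) g) t := fun t => by
    have := congrArg (eval (x t)) hfi
    simp only [eval_add, eval_mul, eval_sub, map_zero] at this
    rw [(hflow f t).deriv, (hflow g t).deriv]
    simp only [eval_add, eval_mul]
    linear_combination this
  refine ⟨fun h => hnc ⟨(eval (x 0) g)⁻¹ * eval (x 0) f, ?_⟩, fun t => ?_⟩
  · calc f = C (eval (x 0) g)⁻¹ * (C (eval (x 0) g) * f) := by
          rw [← mul_assoc, ← C_mul, inv_mul_cancel₀ hg0, C_1, one_mul]
      _ = C ((eval (x 0) g)⁻¹ * eval (x 0) f) * g := by rw [sub_eq_zero.1 h, C_mul, mul_assoc]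
  · simpa using mul_sub_mul_eq_zero_of_wronskian_eq_zero
      (fun t => (hflow f t).differentiableAt) (fun t => (hflow g t).differentiableAt) hW hg0 t

/-- If a polynomial vector field `(P, Q)` admits a non-constant rational first
integral `f/g`, then every trajectory through a point where `g` does not vanish
is algebraic: it lies in the zero set of the nonzero polynomial
`h = g(γ(0))·f − f(γ(0))·g`. -/
theorem trajectory_algebraic_of_rational_first_integral
    (P Q f g : MvPolynomial (Fin 2) ℂ)
    (hg : g ≠ 0)
    (hnc : ¬ ∃ c : ℂ, f = C c * g)
    (hfi : P * (pderiv 0 f * g - f * pderiv 0 g)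
         + Q * (pderiv 1 f * g - f * pderiv 1 g) = 0)
    (γ : ℂ → ℂ × ℂ)
    (hγ : ∀ t : ℂ, HasDerivAt γ
        (eval ![(γ t).1, (γ t).2] P, eval ![(γ t).1, (γ t).2] Q) t)
    (hg0 : eval ![(γ 0).1, (γ 0).2] g ≠ 0) :
    C (eval ![(γ 0).1, (γ 0).2] g) * f - C (eval ![(γ 0).1, (γ 0).2] f) * g ≠ 0 ∧
    ∀ t : ℂ, eval ![(γ t).1, (γ t).2]
        (C (eval ![(γ 0).1, (γ 0).2] g) * f - C (eval ![(γ 0).1, (γ 0).2] f) * g) = 0 :=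
  trajectory_algebraic_of_rational_first_integral_general P Q f g hnc hfi γ hγ hg0
end
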